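/- arXiv:2103.02667 — 2 statements merged into one kernel-verified Lean document; each statement's English description precedes it below -/
import Mathlib

section
/- For each $e$ in a finite index set $\mathcal{E}$, let $R^e: \mathbb{R}^d \to \mathbb{R}$ be convex and differentiable. A vector $v \in \mathbb{R}^d$ can be written as $v = \Phi^\top w$ for some matrix $\Phi \in \mathbb{R}^{p \times d}$ and a vector $w \in \mathbb{R}^p$ that simultaneously minimizes $w' \mapsto R^e(\Phi^\top w')$ for every $e \in \mathcal{E}$, if and only if $v^\top \nabla R^e(v) = 0$ for all $e \in \mathcal{E}$. Moreover, the matrices $\Phi$ admitting such a decomposition are exactly those whose nullspace is orthogonal to $v$ and contains all the gradients $\nabla R^e(v)$. -/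
/-!
For convex `f` the first-order condition is sufficient as well as necessary, so `w` minimizes
`f ∘ Φᵀ` iff the derivative of `f` at `Φᵀ w` vanishes on the range of `Φᵀ`, i.e. iff
`Φ ∇f(Φᵀ w) = 0`. Since `range Φᵀ = (ker Φ)ᗮ`, a decomposition `v = Φᵀ w` exists iff
`v ⟂ ker Φ`. Together these characterize the admissible `Φ`; they force
`v ⬝ᵥ ∇R^e(v) = 0` because `∇R^e(v) ∈ ker Φ`, and conversely the one-row matrix `Φ = vᵀ`
is admissible as soon as `v ⬝ᵥ ∇R^e(v) = 0` for all `e`.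
-/

open Matrix

/-- The continuous linear map `x ↦ g ⬝ᵥ x`, used to express that `g` is the gradient. -/
noncomputable def dotCLM (d : ℕ) (g : Fin d → ℝ) : (Fin d → ℝ) →L[ℝ] ℝ :=
  LinearMap.toContinuousLinearMap
    { toFun := fun x => g ⬝ᵥ x
      map_add' := by intro x y; simp [dotProduct_add]
      map_smul' := by intro c x; simp [dotProduct_smul] }

section Convex

variable {E F : Type*} [NormedAddCommGroup E] [NormedSpace ℝ E]
  [NormedAddCommGroup F] [NormedSpace ℝ F] {f : F → ℝ} {f' : F →L[ℝ] ℝ}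

theorem ConvexOn.add_fderiv_sub_le {s : Set F} {x y : F} (hf : ConvexOn ℝ s f)
    (hx : x ∈ s) (hy : y ∈ s) (hd : HasFDerivAt f f' x) : f x + f' (y - x) ≤ f y := by
  let ℓ : ℝ →ᵃ[ℝ] F := AffineMap.lineMap x y
  have hline : ConvexOn ℝ (ℓ ⁻¹' s) (f ∘ ℓ) := hf.comp_affineMap ℓ
  have hd' : HasDerivAt (f ∘ ℓ) (f' (y - x)) 0 := by
    refine HasFDerivAt.comp_hasDerivAt (0 : ℝ) ?_ AffineMap.hasDerivAt_lineMap
    rwa [AffineMap.lineMap_apply_zero]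
  have := hline.le_slope_of_hasDerivAt (x := 0) (y := 1) (by simpa [ℓ] using hx)
    (by simpa [ℓ] using hy) zero_lt_one hd'
  simp only [slope_def_field, Function.comp_apply, ℓ, AffineMap.lineMap_apply_zero,
    AffineMap.lineMap_apply_one, sub_zero, div_one] at this
  linarith

theorem ConvexOn.forall_le_comp_iff_fderiv_comp_eq_zero (L : E →L[ℝ] F) {w : E}
    (hf : ConvexOn ℝ Set.univ f) (hd : HasFDerivAt f f' (L w)) :
    (∀ w', f (L w) ≤ f (L w')) ↔ f'.comp L = 0 := by
  refine ⟨fun hmin => ?_, fun hzero w' => ?_⟩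
  · exact IsLocalMin.hasFDerivAt_eq_zero (Filter.Eventually.of_forall hmin)
      (hd.comp w L.hasFDerivAt)
  · have := hf.add_fderiv_sub_le (Set.mem_univ _) (Set.mem_univ (L w')) hd
    rw [← map_sub, ← ContinuousLinearMap.comp_apply, hzero] at this
    simpa using this

end Convex

theorem Matrix.exists_transpose_mulVec_eq_iff {m n : Type*} [Fintype m] [Fintype n]
    (A : Matrix m n ℝ) (v : n → ℝ) :
    (∃ w, Aᵀ *ᵥ w = v) ↔ ∀ x, A *ᵥ x = 0 → x ⬝ᵥ v = 0 := by
  classical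
  have key := (toEuclideanLin A).orthogonal_ker
  rw [← toEuclideanLin_conjTranspose_eq_adjoint, conjTranspose_eq_transpose_of_trivial] at key
  refine ⟨fun ⟨w, hw⟩ x hx => ?_, fun h => ?_⟩
  · rw [← hw, dotProduct_mulVec, vecMul_transpose, hx, zero_dotProduct]
  · have hv : WithLp.toLp 2 v ∈ (toEuclideanLin A).kerᗮ := by
      refine (Submodule.mem_orthogonal' _ _).mpr fun u hu => ?_
      simpa [EuclideanSpace.inner_eq_star_dotProduct] using h u.ofLp (congrArg WithLp.ofLp hu)
    obtain ⟨w, hw⟩ := key ▸ hv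
    exact ⟨w.ofLp, congrArg WithLp.ofLp hw⟩

theorem ConvexOn.forall_le_comp_transpose_mulVec_iff {m : Type*} [Fintype m] {d : ℕ}
    {f : (Fin d → ℝ) → ℝ} {g : Fin d → ℝ} (Φ : Matrix m (Fin d) ℝ) {w : m → ℝ}
    (hf : ConvexOn ℝ Set.univ f) (hd : HasFDerivAt f (dotCLM d g) (Φᵀ *ᵥ w)) :
    (∀ w', f (Φᵀ *ᵥ w) ≤ f (Φᵀ *ᵥ w')) ↔ Φ *ᵥ g = 0 := by
  let L : (m → ℝ) →L[ℝ] (Fin d → ℝ) := LinearMap.toContinuousLinearMap Φᵀ.mulVecLin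
  refine (hf.forall_le_comp_iff_fderiv_comp_eq_zero L hd).trans ?_
  rw [← dotProduct_eq_zero_iff, ContinuousLinearMap.ext_iff]
  refine forall_congr' fun u => ?_
  change g ⬝ᵥ Φᵀ *ᵥ u = 0 ↔ _
  rw [dotProduct_mulVec, vecMul_transpose]

theorem exists_transpose_mulVec_eq_and_minimizes_iff {d : ℕ} {E m : Type*} [Fintype m]
    (R : E → (Fin d → ℝ) → ℝ) (g : E → Fin d → ℝ)
    (hconv : ∀ e, ConvexOn ℝ Set.univ (R e)) {v : Fin d → ℝ}
    (hdiff : ∀ e, HasFDerivAt (R e) (dotCLM d (g e)) v) (Φ : Matrix m (Fin d) ℝ) :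
    (∃ w, Φᵀ *ᵥ w = v ∧ ∀ e w', R e (Φᵀ *ᵥ w) ≤ R e (Φᵀ *ᵥ w')) ↔
      (∀ x, Φ *ᵥ x = 0 → x ⬝ᵥ v = 0) ∧ ∀ e, Φ *ᵥ g e = 0 := by
  constructor
  · rintro ⟨w, rfl, hmin⟩
    exact ⟨(exists_transpose_mulVec_eq_iff Φ _).mp ⟨w, rfl⟩,
      fun e => ((hconv e).forall_le_comp_transpose_mulVec_iff Φ (hdiff e)).mp (hmin e)⟩
  · rintro ⟨hker, hgrad⟩
    obtain ⟨w, rfl⟩ := (exists_transpose_mulVec_eq_iff Φ v).mpr hker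
    exact ⟨w, rfl,
      fun e => ((hconv e).forall_le_comp_transpose_mulVec_iff Φ (hdiff e)).mpr (hgrad e)⟩

theorem invariant_linear_predictor_characterization_general
    (d : ℕ) (E : Type*)
    (R : E → (Fin d → ℝ) → ℝ)
    (grad : E → (Fin d → ℝ) → (Fin d → ℝ))
    (hconv : ∀ e, ConvexOn ℝ Set.univ (R e))
    (hdiff : ∀ e x, HasFDerivAt (R e) (dotCLM d (grad e x)) x)
    (v : Fin d → ℝ) :
    ((∃ p : ℕ, ∃ Φ : Matrix (Fin p) (Fin d) ℝ, ∃ w : Fin p → ℝ,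
        Φ.transpose.mulVec w = v ∧
        ∀ e, ∀ w' : Fin p → ℝ,
          R e (Φ.transpose.mulVec w) ≤ R e (Φ.transpose.mulVec w'))
      ↔ ∀ e, v ⬝ᵥ grad e v = 0)
    ∧
    (∀ (p : ℕ) (Φ : Matrix (Fin p) (Fin d) ℝ),
      (∃ w : Fin p → ℝ,
        Φ.transpose.mulVec w = v ∧
        ∀ e, ∀ w' : Fin p → ℝ,
          R e (Φ.transpose.mulVec w) ≤ R e (Φ.transpose.mulVec w'))
      ↔ ((∀ x : Fin d → ℝ, Φ.mulVec x = 0 → x ⬝ᵥ v = 0) ∧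
          ∀ e, Φ.mulVec (grad e v) = 0)) := by
  have characterization := fun {p : ℕ} (Φ : Matrix (Fin p) (Fin d) ℝ) =>
    exists_transpose_mulVec_eq_and_minimizes_iff R (grad · v) hconv (fun e => hdiff e v) Φ
  refine ⟨⟨fun ⟨p, Φ, hΦ⟩ e => ?_, fun horth => ?_⟩, fun p Φ => characterization Φ⟩
  · obtain ⟨hker, hgrad⟩ := (characterization Φ).mp hΦ
    rw [dotProduct_comm]
    exact hker _ (hgrad e)
  · refine ⟨1, replicateRow (Fin 1) v,
      (characterization _).mpr ⟨fun x hx => ?_, fun e => ?_⟩⟩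
    · rw [dotProduct_comm]
      exact congrFun hx 0
    · exact funext fun _ => horth e

/-- for convex differentiable risks `R^e : ℝ^d → ℝ`, a vector `v` can be
written as `v = Φᵀ w` with `w` simultaneously minimizing `w' ↦ R^e(Φᵀ w')` for all `e`
iff `vᵀ ∇R^e(v) = 0` for all `e`; moreover the matrices `Φ` admitting such a decomposition
are exactly those whose nullspace is orthogonal to `v` and contains all `∇R^e(v)`. -/
theorem invariant_linear_predictor_characterization
    (d : ℕ) (E : Type*) [Fintype E]
    (R : E → (Fin d → ℝ) → ℝ)
    (grad : E → (Fin d → ℝ) → (Fin d → ℝ))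
    (hconv : ∀ e, ConvexOn ℝ Set.univ (R e))
    (hdiff : ∀ e x, HasFDerivAt (R e) (dotCLM d (grad e x)) x)
    (v : Fin d → ℝ) :
    ((∃ p : ℕ, ∃ Φ : Matrix (Fin p) (Fin d) ℝ, ∃ w : Fin p → ℝ,
        Φ.transpose.mulVec w = v ∧
        ∀ e, ∀ w' : Fin p → ℝ,
          R e (Φ.transpose.mulVec w) ≤ R e (Φ.transpose.mulVec w'))
      ↔ ∀ e, v ⬝ᵥ grad e v = 0)
    ∧
    (∀ (p : ℕ) (Φ : Matrix (Fin p) (Fin d) ℝ),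
      (∃ w : Fin p → ℝ,
        Φ.transpose.mulVec w = v ∧
        ∀ e, ∀ w' : Fin p → ℝ,
          R e (Φ.transpose.mulVec w) ≤ R e (Φ.transpose.mulVec w'))
      ↔ ((∀ x : Fin d → ℝ, Φ.mulVec x = 0 → x ⬝ᵥ v = 0) ∧
          ∀ e, Φ.mulVec (grad e v) = 0)) :=
  invariant_linear_predictor_characterization_general d E R grad hconv hdiff v
end

section
/- Fix $v \in \mathbb{R}^d$ and arbitrary vectors $\Sigma^e_{X,\epsilon} \in \mathbb{R}^d$ for $e$ in a finite set $\mathcal{E}_{\mathrm{train}}$ of size $m$. Define $G: \mathbb{R}^d \setminus \{0\} \to \mathbb{R}^{m \times d}$ by $(G(x))_{e,\cdot} = \Sigma^e_{X,X} x - \Sigma^e_{X,\epsilon}$. Then for almost every tuple $(\Sigma^e_{X,X})_{e} \in (\mathcal{S}^{d \times d}_+)^m$ of symmetric positive semi-definite matrices (i.e., outside a set of measure zero), whenever $m > \frac{d}{r} + d - r$, the matrix $G(x)$ has rank greater than $d - r$ for every nonzero $x$; equivalently, the general-position condition of degree $r$ holds generically. -/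
/-!
If `x ≠ 0` and the vectors `Σₑ x - sₑ` span at most `d - r` dimensions, they are annihilated by
`r` independent rows, which can be normalised to a matrix `[1 | B]` up to a permutation `σ` of
the columns (a chart of the Grassmannian). For fixed `x` and chart, the annihilation conditions are
`r` linear equations in the coordinates of each `Σₑ`, and they are independent because every
vector is `S x` for some symmetric `S`. So `r` suitable coordinates `T` of each `Σₑ` are determined
by the others together with `(x, B)`.

Hence, for each of the finitely many `(σ, T)`, the bad set lies in the image of a differentiable
self-map of the coordinate space that reads `(x, B)`, i.e. `d + r (d - r)` numbers, from the
`m r` recomputed coordinates `(e, T j)`. As `d + r (d - r) < m r`, one of these is read by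
nothing, so the map is constant in that direction, its Jacobian vanishes and its image is null.
-/

open MeasureTheory Matrix

/-- A symmetric `d × d` matrix described by its upper-triangular coordinates. -/
def symOfCoords (d : ℕ) (a : {p : Fin d × Fin d // p.1 ≤ p.2} → ℝ) :
    Matrix (Fin d) (Fin d) ℝ :=
  Matrix.of fun i j =>
    if h : i ≤ j then a ⟨(i, j), h⟩ else a ⟨(j, i), le_of_not_ge h⟩

theorem Matrix.exists_injective_isUnit_det_submatrix {K m n : Type*} [Field K] [Fintype m]
    [DecidableEq m] [Fintype n] (M : Matrix m n K) (hM : LinearIndependent K M.row) :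
    ∃ g : m → n, Function.Injective g ∧ IsUnit (M.submatrix id g).det := by
  obtain ⟨f, hf_mem, -, hf⟩ := Submodule.exists_fun_fin_finrank_span_eq K (Set.range M.col)
  choose g hg using hf_mem
  have hcard : Fintype.card m = Module.finrank K (Submodule.span K (Set.range M.col)) := by
    rw [← rank_eq_finrank_span_cols, hM.rank_matrix]
  let e := Fintype.equivFinOfCardEq hcard
  have hcol : (M.submatrix id (g ∘ e)).col = f ∘ e := funext fun i => hg (e i)
  refine ⟨g ∘ e, ?_, ?_⟩
  · refine Function.Injective.comp (fun i i' h => hf.injective ?_) e.injective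
    rw [← hg, ← hg, h]
  · rw [← isUnit_iff_isUnit_det, ← linearIndependent_cols_iff_isUnit, hcol]
    exact hf.comp e e.injective

theorem exists_linearIndependent_mulVec_eq_zero {K ι : Type*} [Field K] [Fintype ι] {d r : ℕ}
    (v : ι → Fin d → K)
    (hv : Module.finrank K (Submodule.span K (Set.range v)) ≤ d - r) (hrd : r ≤ d) :
    ∃ U : Matrix (Fin r) (Fin d) K, LinearIndependent K U.row ∧ ∀ e, U *ᵥ v e = 0 := by
  set V : Matrix ι (Fin d) K := Matrix.of v
  have hker : r ≤ Module.finrank K (LinearMap.ker V.mulVecLin) := by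
    have hdim := LinearMap.finrank_range_add_finrank_ker V.mulVecLin
    have hrank : V.rank = Module.finrank K (Submodule.span K (Set.range v)) :=
      V.rank_eq_finrank_span_row
    simp only [Matrix.rank, Module.finrank_fin_fun] at hrank hdim
    omega
  set b := Module.finBasis K (LinearMap.ker V.mulVecLin)
  refine ⟨Matrix.of fun j => b (Fin.castLE hker j), ?_, fun e => ?_⟩
  · exact (b.linearIndependent.comp _ (Fin.castLE_injective hker)).map'
      (Submodule.subtype _) (Submodule.ker_subtype _)
  · ext j
    have hj : V *ᵥ b (Fin.castLE hker j) = 0 := (b (Fin.castLE hker j)).2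
    exact (dotProduct_comm _ _).trans (congrFun hj e)

theorem exists_sumEquiv_inl_eq {r d : ℕ} {g : Fin r → Fin d} (hg : Function.Injective g) :
    ∃ σ : (Fin r ⊕ Fin (d - r)) ≃ Fin d, ∀ j, σ (Sum.inl j) = g j := by
  have hcard : Fintype.card (Fin (d - r)) = Fintype.card ↥(Set.range g)ᶜ := by
    rw [Fintype.card_compl_set, Set.card_range_of_injective hg]
    simp
  exact ⟨(Equiv.sumCongr (Equiv.ofInjective g hg) (Fintype.equivOfCardEq hcard)).trans
    (Equiv.Set.sumCompl (Set.range g)), fun j => rfl⟩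

theorem Function.Embedding.exists_notMem_range_of_card_lt {α β : Type*} [Fintype α]
    [Fintype β] (h : Fintype.card α < Fintype.card β) : ∃ (f : α ↪ β) (b : β), b ∉ Set.range f := by
  obtain ⟨f⟩ := Function.Embedding.nonempty_of_card_le h.le
  refine ⟨f, ?_⟩
  by_contra! hf
  exact h.not_ge (Fintype.card_le_of_surjective f hf)

theorem add_mul_sub_lt_of_div_add_sub_lt {d r m : ℕ} (hr : 0 < r) (hrd : r ≤ d)
    (hm : (d : ℝ) / r + d - r < m) : d + r * (d - r) < m * r := by
  have hr' : (0 : ℝ) < r := Nat.cast_pos.2 hr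
  have hreal : ((d + r * (d - r) : ℕ) : ℝ) < ((m * r : ℕ) : ℝ) := by
    push_cast [Nat.cast_sub hrd]
    calc (d : ℝ) + r * (d - r) = ((d : ℝ) / r + d - r) * r := by field_simp; ring
      _ < m * r := mul_lt_mul_of_pos_right hm hr'
  exact_mod_cast hreal

section SolveCoords

variable {K ι κ : Type*} [Field K] [Fintype ι] [Fintype κ]

theorem mulVec_eq_submatrix_mulVec_add_indicator (L : Matrix ι κ K) (T : ι ↪ κ) (a : κ → K) :
    L *ᵥ a = L.submatrix id T *ᵥ (a ∘ T) + L *ᵥ (Set.range T)ᶜ.indicator a := by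
  classical
  ext j
  simp only [mulVec, dotProduct, Pi.add_apply, submatrix_apply, id, Function.comp_apply]
  rw [← Finset.sum_add_sum_compl (Finset.univ.map T), Finset.sum_map,
    ← Finset.sum_add_sum_compl (Finset.univ.map T) (fun c => L j c * _), Finset.sum_map]
  congr 1
  have hrange : ∑ j', L j (T j') * (Set.range T)ᶜ.indicator a (T j') = 0 :=
    Finset.sum_eq_zero fun j' _ => by simp
  rw [hrange, zero_add]
  refine Finset.sum_congr rfl fun c hc => ?_
  rw [Set.indicator_of_mem]
  simpa using hc

variable [DecidableEq ι]

noncomputable def solveCoords (L : Matrix ι κ K) (b : ι → K) (T : ι ↪ κ) (a : κ → K) : κ → K :=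
  Function.extend T ((L.submatrix id T)⁻¹ *ᵥ (b - L *ᵥ (Set.range T)ᶜ.indicator a)) a

variable (L : Matrix ι κ K) (b : ι → K) (T : ι ↪ κ)

theorem solveCoords_apply_embedding (a : κ → K) (j : ι) :
    solveCoords L b T a (T j) =
      ((L.submatrix id T)⁻¹ *ᵥ (b - L *ᵥ (Set.range T)ᶜ.indicator a)) j :=
  T.injective.extend_apply _ _ j

theorem solveCoords_apply_of_notMem (a : κ → K) {c : κ} (hc : c ∉ Set.range T) :
    solveCoords L b T a c = a c :=
  Function.extend_apply' _ _ _ fun ⟨j, hj⟩ => hc ⟨j, hj⟩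

theorem solveCoords_eq_self {a : κ → K} (h : L *ᵥ a = b) (hT : IsUnit (L.submatrix id T).det) :
    solveCoords L b T a = a := by
  funext c
  by_cases hc : c ∈ Set.range T
  · obtain ⟨j, rfl⟩ := hc
    rw [solveCoords_apply_embedding, ← h, mulVec_eq_submatrix_mulVec_add_indicator L T a,
      add_sub_cancel_right, mulVec_mulVec, nonsing_inv_mul _ hT, one_mulVec, Function.comp_apply]
  · exact solveCoords_apply_of_notMem L b T a hc

theorem solveCoords_congr {a a' : κ → K} (h : ∀ c ∉ Set.range T, a c = a' c) :
    solveCoords L b T a = solveCoords L b T a' := by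
  funext c
  by_cases hc : c ∈ Set.range T
  · obtain ⟨j, rfl⟩ := hc
    have hind : (Set.range T)ᶜ.indicator a = (Set.range T)ᶜ.indicator a' :=
      Set.indicator_congr fun c hc => h c hc
    rw [solveCoords_apply_embedding, solveCoords_apply_embedding, hind]
  · rw [solveCoords_apply_of_notMem L b T a hc, solveCoords_apply_of_notMem L b T a' hc, h c hc]

end SolveCoords

section Differentiable

variable {X : Type*} [NormedAddCommGroup X] [NormedSpace ℝ X]

theorem Differentiable.matrix_det {n : Type*} [Fintype n] [DecidableEq n]
    {M : X → Matrix n n ℝ} (hM : ∀ i j, Differentiable ℝ fun x => M x i j) :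
    Differentiable ℝ fun x => (M x).det := by
  simp only [det_apply, Units.smul_def, zsmul_eq_mul]
  fun_prop

theorem DifferentiableAt.matrix_inv_apply {n : Type*} [Fintype n] [DecidableEq n]
    {M : X → Matrix n n ℝ} (hM : ∀ i j, Differentiable ℝ fun x => M x i j) {x : X}
    (hx : IsUnit (M x).det) (i j : n) :
    DifferentiableAt ℝ (fun y => (M y)⁻¹ i j) x := by
  have hinv : (fun y => (M y)⁻¹ i j)
      = fun y => (M y).det⁻¹ * ((M y).updateRow j (Pi.single i 1)).det := by
    simp [inv_def, adjugate_apply]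
  rw [hinv]
  have hcof : Differentiable ℝ fun y => ((M y).updateRow j (Pi.single i 1)).det :=
    Differentiable.matrix_det fun k l => by
      by_cases hk : k = j
      · subst hk
        simp
      · simpa [updateRow_ne hk] using hM k l
  exact ((Differentiable.matrix_det hM x).inv hx.ne_zero).mul (hcof x)

variable {ι κ : Type*} [Fintype ι] [DecidableEq ι] [Fintype κ]

theorem differentiableAt_solveCoords {L : X → Matrix ι κ ℝ} {b : X → ι → ℝ} {a : X → κ → ℝ}
    (hL : ∀ j c, Differentiable ℝ fun x => L x j c) (hb : ∀ j, Differentiable ℝ fun x => b x j)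
    (ha : ∀ c, Differentiable ℝ fun x => a x c) (T : ι ↪ κ) {x : X}
    (hx : IsUnit ((L x).submatrix id T).det) :
    DifferentiableAt ℝ (fun y => solveCoords (L y) (b y) T (a y)) x := by
  rw [differentiableAt_pi]
  intro c
  by_cases hc : c ∈ Set.range T
  · obtain ⟨j, rfl⟩ := hc
    have hinv := DifferentiableAt.matrix_inv_apply (M := fun y => (L y).submatrix id T)
      (fun j' j'' => hL j' (T j'')) hx
    have hind : ∀ c, Differentiable ℝ fun y => (Set.range T)ᶜ.indicator (a y) c := fun c => by
      by_cases hc : c ∈ (Set.range T)ᶜ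
      · simpa [Set.indicator_of_mem hc] using ha c
      · simp [Set.indicator_of_notMem hc]
    simp only [solveCoords_apply_embedding, mulVec, dotProduct, Pi.sub_apply]
    exact DifferentiableAt.fun_sum fun k _ => (hinv j k).mul ((hb k).differentiableAt.sub
      (DifferentiableAt.fun_sum fun c _ => ((hL k c).mul (hind c)).differentiableAt))
  · simpa [solveCoords_apply_of_notMem _ _ _ _ hc] using (ha c).differentiableAt

end Differentiable

theorem addHaar_image_eq_zero_of_add_smul_eq {F : Type*} [NormedAddCommGroup F]
    [NormedSpace ℝ F] [FiniteDimensional ℝ F] [MeasurableSpace F] [BorelSpace F]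
    (μ : Measure F) [μ.IsAddHaarMeasure] {f : F → F} {s : Set F}
    (hf : ∀ x ∈ s, DifferentiableAt ℝ f x) {u : F} (hu : u ≠ 0)
    (hfu : ∀ x (t : ℝ), f (x + t • u) = f x) : μ (f '' s) = 0 := by
  refine addHaar_image_eq_zero_of_det_fderivWithin_eq_zero μ (f' := fderiv ℝ f)
    (fun x hx => (hf x hx).hasFDerivAt.hasFDerivWithinAt) fun x hx => ?_
  have hu_ker : fderiv ℝ f x u = 0 := by
    rw [← (hf x hx).lineDeriv_eq_fderiv]
    simp [lineDeriv, hfu]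
  exact LinearMap.det_eq_zero_iff_ker_ne_bot.2 fun h => hu (LinearMap.ker_eq_bot'.1 h u hu_ker)

def chartMatrix {r d : ℕ} (σ : (Fin r ⊕ Fin (d - r)) ≃ Fin d)
    (B : Matrix (Fin r) (Fin (d - r)) ℝ) : Matrix (Fin r) (Fin d) ℝ :=
  (fromCols 1 B).submatrix id σ.symm

section Chart

variable {r d : ℕ} (σ : (Fin r ⊕ Fin (d - r)) ≃ Fin d) (B : Matrix (Fin r) (Fin (d - r)) ℝ)

@[simp]
theorem chartMatrix_apply_equiv (j : Fin r) (p : Fin r ⊕ Fin (d - r)) :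
    chartMatrix σ B j (σ p) = fromCols 1 B j p := by
  simp [chartMatrix]

theorem linearIndependent_row_chartMatrix : LinearIndependent ℝ (chartMatrix σ B).row := by
  rw [← vecMul_injective_iff]
  intro g g' h
  funext j
  simpa [vecMul, dotProduct, one_apply] using congrFun h (σ (Sum.inl j))

end Chart

theorem exists_chartMatrix_mulVec_eq_zero {ι : Type*} [Fintype ι] {d r : ℕ} (hrd : r ≤ d)
    (v : ι → Fin d → ℝ)
    (hv : Module.finrank ℝ (Submodule.span ℝ (Set.range v)) ≤ d - r) :
    ∃ (σ : (Fin r ⊕ Fin (d - r)) ≃ Fin d) (B : Matrix (Fin r) (Fin (d - r)) ℝ),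
      ∀ e, chartMatrix σ B *ᵥ v e = 0 := by
  obtain ⟨U, hU, hUv⟩ := exists_linearIndependent_mulVec_eq_zero v hv hrd
  obtain ⟨g, hg, hdet⟩ := U.exists_injective_isUnit_det_submatrix hU
  obtain ⟨σ, hσ⟩ := exists_sumEquiv_inl_eq hg
  set W := (U.submatrix id g)⁻¹ * U
  have hWg : W.submatrix id g = 1 := nonsing_inv_mul _ hdet
  have hW : chartMatrix σ (W.submatrix id (σ ∘ Sum.inr)) = W := by
    ext j i
    obtain ⟨j' | i', rfl⟩ := σ.surjective i
    · rw [chartMatrix_apply_equiv, fromCols_apply_inl, hσ]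
      exact (congrFun (congrFun hWg j) j').symm
    · simp
  refine ⟨σ, W.submatrix id (σ ∘ Sum.inr), fun e => ?_⟩
  rw [hW, ← mulVec_mulVec, hUv, mulVec_zero]

abbrev SymCoord (d : ℕ) := {p : Fin d × Fin d // p.1 ≤ p.2}

section SymCoord

variable {d : ℕ}

def symIndex (i j : Fin d) : SymCoord d :=
  if h : i ≤ j then ⟨(i, j), h⟩ else ⟨(j, i), le_of_not_ge h⟩

theorem symOfCoords_apply (a : SymCoord d → ℝ) (i j : Fin d) :
    symOfCoords d a i j = a (symIndex i j) := by
  unfold symOfCoords symIndex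
  split_ifs <;> simp [*]

theorem symOfCoords_coords {A : Matrix (Fin d) (Fin d) ℝ} (hA : A.IsSymm) :
    symOfCoords d (fun c => A c.1.1 c.1.2) = A := by
  ext i j
  simp only [symOfCoords, of_apply]
  split_ifs
  · rfl
  · exact hA.apply i j

theorem exists_symOfCoords_mulVec_eq {x : Fin d → ℝ} (hx : x ≠ 0) (y : Fin d → ℝ) :
    ∃ a, symOfCoords d a *ᵥ x = y := by
  have hs : x ⬝ᵥ x ≠ 0 := dotProduct_self_eq_zero.not.2 hx
  set A := (x ⬝ᵥ x)⁻¹ • (vecMulVec y x + vecMulVec x y)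
    - ((x ⬝ᵥ x)⁻¹ * (x ⬝ᵥ x)⁻¹ * (y ⬝ᵥ x)) • vecMulVec x x
  have hA : A.IsSymm := by
    simp [A, IsSymm, transpose_vecMulVec, add_comm]
  refine ⟨fun c => A c.1.1 c.1.2, ?_⟩
  rw [symOfCoords_coords hA]
  ext i
  simp [A, sub_mulVec, add_mulVec, smul_mulVec, vecMulVec_mulVec, dotProduct_comm y x]
  field_simp
  ring

def symCoeffMatrix {ι : Type*} (x : Fin d → ℝ) (W : Matrix ι (Fin d) ℝ) :
    Matrix ι (SymCoord d) ℝ :=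
  of fun j c => ∑ p : Fin d × Fin d with symIndex p.1 p.2 = c, W j p.1 * x p.2

variable {ι : Type*}

theorem symCoeffMatrix_mulVec (x : Fin d → ℝ) (W : Matrix ι (Fin d) ℝ) (a : SymCoord d → ℝ) :
    symCoeffMatrix x W *ᵥ a = W *ᵥ (symOfCoords d a *ᵥ x) := by
  ext j
  calc (symCoeffMatrix x W *ᵥ a) j
      = ∑ c, ∑ p : Fin d × Fin d with symIndex p.1 p.2 = c,
          W j p.1 * (a (symIndex p.1 p.2) * x p.2) := by
        simp only [mulVec, dotProduct, symCoeffMatrix, of_apply, Finset.sum_mul]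
        refine Finset.sum_congr rfl fun c _ => Finset.sum_congr rfl fun p hp => ?_
        rw [(Finset.mem_filter.1 hp).2]
        ring
    _ = (W *ᵥ (symOfCoords d a *ᵥ x)) j := by
        rw [Finset.sum_fiberwise, Fintype.sum_prod_type]
        simp [mulVec, dotProduct, symOfCoords_apply, Finset.mul_sum]

theorem linearIndependent_row_symCoeffMatrix [Fintype ι] {x : Fin d → ℝ} (hx : x ≠ 0)
    {W : Matrix ι (Fin d) ℝ} (hW : LinearIndependent ℝ W.row) :
    LinearIndependent ℝ (symCoeffMatrix x W).row := by
  rw [← vecMul_injective_iff] at hW ⊢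
  intro g g' (h : g ᵥ* symCoeffMatrix x W = g' ᵥ* symCoeffMatrix x W)
  have horth : ∀ a, (g - g') ᵥ* W ⬝ᵥ (symOfCoords d a *ᵥ x) = 0 := fun a => by
    rw [← dotProduct_mulVec, ← symCoeffMatrix_mulVec, dotProduct_mulVec, sub_vecMul, h, sub_self,
      zero_dotProduct]
  obtain ⟨a, ha⟩ := exists_symOfCoords_mulVec_eq hx ((g - g') ᵥ* W)
  have hself := horth a
  rw [ha, dotProduct_self_eq_zero, sub_vecMul, sub_eq_zero] at hself
  exact hW hself

end SymCoord

section Param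

variable {d r : ℕ} {E : Type*} (Sige : E → Fin d → ℝ) (σ : (Fin r ⊕ Fin (d - r)) ≃ Fin d)
  (T : Fin r ↪ SymCoord d) (J : Fin d ⊕ Fin r × Fin (d - r) ↪ E × Fin r)

def storedParams (v : E → SymCoord d → ℝ) : Fin d ⊕ Fin r × Fin (d - r) → ℝ :=
  fun p => v (J p).1 (T (J p).2)

def paramPoint (v : E → SymCoord d → ℝ) : Fin d → ℝ :=
  fun i => storedParams T J v (Sum.inl i)

def paramChart (v : E → SymCoord d → ℝ) : Matrix (Fin r) (Fin (d - r)) ℝ :=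
  of fun j i' => storedParams T J v (Sum.inr (j, i'))

def paramMatrix (v : E → SymCoord d → ℝ) : Matrix (Fin r) (SymCoord d) ℝ :=
  symCoeffMatrix (paramPoint T J v) (chartMatrix σ (paramChart T J v))

/-- The parameters `(x, B)` are stored, through `J`, in the coordinates `v e (T j)`, which
`param` discards and recomputes. -/
noncomputable def param (v : E → SymCoord d → ℝ) : E → SymCoord d → ℝ :=
  fun e => solveCoords (paramMatrix σ T J v) (chartMatrix σ (paramChart T J v) *ᵥ Sige e) T (v e)

def paramDomain : Set (E → SymCoord d → ℝ) :=
  {v | IsUnit ((paramMatrix σ T J v).submatrix id T).det}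

theorem mem_image_param {A : E → SymCoord d → ℝ} {x : Fin d → ℝ}
    {B : Matrix (Fin r) (Fin (d - r)) ℝ}
    (hA : ∀ e, chartMatrix σ B *ᵥ (symOfCoords d (A e) *ᵥ x - Sige e) = 0)
    (hdet : IsUnit ((symCoeffMatrix x (chartMatrix σ B)).submatrix id T).det) :
    A ∈ param Sige σ T J '' paramDomain σ T J := by
  set slot : Fin d ⊕ Fin r × Fin (d - r) → E × SymCoord d := fun p => ((J p).1, T (J p).2)
  have hslot : Function.Injective slot := fun p q h =>
    J.injective (Prod.ext (Prod.ext_iff.1 h).1 (T.injective (Prod.ext_iff.1 h).2))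
  set v : E → SymCoord d → ℝ := Function.curry
    (Function.extend slot (Sum.elim x fun q => B q.1 q.2) (Function.uncurry A))
  have hstored : storedParams T J v = Sum.elim x fun q => B q.1 q.2 :=
    funext fun p => hslot.extend_apply _ _ p
  have hpoint : paramPoint T J v = x := by
    funext i
    simp [paramPoint, hstored]
  have hchart : paramChart T J v = B := by
    ext j i'
    simp [paramChart, hstored]
  have hoff : ∀ e, ∀ c ∉ Set.range T, v e c = A e c := fun e c hc =>
    Function.extend_apply' _ _ _ fun ⟨p, hp⟩ => hc ⟨(J p).2, congrArg Prod.snd hp⟩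
  refine ⟨v, by simpa [paramDomain, paramMatrix, hpoint, hchart] using hdet, funext fun e => ?_⟩
  rw [param, paramMatrix, hpoint, hchart, solveCoords_congr _ _ T (hoff e)]
  refine solveCoords_eq_self _ _ T ?_ hdet
  rw [symCoeffMatrix_mulVec, ← sub_eq_zero, ← mulVec_sub, hA]

theorem param_congr {q : E × Fin r} (hq : q ∉ Set.range J) {v w : E → SymCoord d → ℝ}
    (hvw : ∀ e c, (e, c) ≠ (q.1, T q.2) → v e c = w e c) :
    param Sige σ T J v = param Sige σ T J w := by
  have hstored : storedParams T J v = storedParams T J w := funext fun p =>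
    hvw _ _ fun h => hq ⟨p, Prod.ext (Prod.ext_iff.1 h).1 (T.injective (Prod.ext_iff.1 h).2)⟩
  funext e
  unfold param paramMatrix paramPoint paramChart
  rw [hstored]
  exact solveCoords_congr _ _ T fun c hc => hvw e c fun h => hc ⟨q.2, (Prod.ext_iff.1 h).2.symm⟩

variable [Fintype E]

theorem differentiableAt_param {v : E → SymCoord d → ℝ} (hv : v ∈ paramDomain σ T J) :
    DifferentiableAt ℝ (param Sige σ T J) v := by
  have hstored : ∀ p, Differentiable ℝ fun v : E → SymCoord d → ℝ => storedParams T J v p :=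
    fun p => by unfold storedParams; fun_prop
  have hchart : ∀ j i, Differentiable ℝ fun v => chartMatrix σ (paramChart T J v) j i := by
    intro j i
    obtain ⟨j' | i', rfl⟩ := σ.surjective i
    · simp
    · simpa [paramChart] using hstored (Sum.inr (j, i'))
  rw [differentiableAt_pi]
  intro e
  refine differentiableAt_solveCoords (fun j c => ?_) (fun j => ?_) (fun c => ?_) T hv
  · simp only [paramMatrix, symCoeffMatrix, of_apply, paramPoint]
    exact Differentiable.fun_sum fun p _ => (hchart j p.1).mul (hstored (Sum.inl p.2))
  · simp only [mulVec, dotProduct]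
    exact Differentiable.fun_sum fun i _ => (hchart j i).mul_const _
  · fun_prop

theorem volume_image_param_eq_zero [DecidableEq E] {q : E × Fin r} (hq : q ∉ Set.range J) :
    volume (param Sige σ T J '' paramDomain σ T J) = 0 := by
  set u : E → SymCoord d → ℝ := Pi.single q.1 (Pi.single (T q.2) 1)
  have hu : u ≠ 0 := fun h => by simpa [u] using congrFun (congrFun h q.1) (T q.2)
  refine addHaar_image_eq_zero_of_add_smul_eq volume
    (fun v hv => differentiableAt_param Sige σ T J hv) hu fun v t => ?_
  refine param_congr Sige σ T J hq fun e c hec => ?_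
  have hu_ec : u e c = 0 := by
    by_cases he : e = q.1
    · subst he
      have hc : c ≠ T q.2 := fun hc => hec (by rw [hc])
      simp [u, hc]
    · simp [u, he]
  simp [hu_ec]

end Param

/-- genericity of the linear general position condition. Fix arbitrary
vectors `Σ^e_{X,ε}`. For almost every tuple of symmetric positive semi-definite matrices
`(Σ^e_{X,X})_e` (symmetric matrices being parametrized by their upper-triangular
coordinates, with Lebesgue measure on the coordinates), if the number `m` of
environments satisfies `m > d/r + d - r`, then for every nonzero `x` the vectors
`Σ^e_{X,X} x - Σ^e_{X,ε}` span a subspace of dimension greater than `d - r`; i.e. the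
set of PSD tuples violating general position of degree `r` has measure zero. -/
theorem general_position_is_generic
    (d r : ℕ) (E : Type*) [Fintype E]
    (hrpos : 0 < r) (hrd : r ≤ d)
    (hm : (Fintype.card E : ℝ) > (d : ℝ) / r + (d : ℝ) - r)
    (Sige : E → Fin d → ℝ) :
    volume {A : E → ({p : Fin d × Fin d // p.1 ≤ p.2} → ℝ) |
      (∀ e, (symOfCoords d (A e)).PosSemidef) ∧
      ∃ x : Fin d → ℝ, x ≠ 0 ∧
        Module.finrank ℝ (Submodule.span ℝ (Set.range fun e : E =>
          (symOfCoords d (A e)).mulVec x - Sige e)) ≤ d - r} = 0 := by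
  classical
  obtain ⟨J, q, hq⟩ := Function.Embedding.exists_notMem_range_of_card_lt
    (α := Fin d ⊕ Fin r × Fin (d - r)) (β := E × Fin r) (by
      simpa [mul_comm] using add_mul_sub_lt_of_div_add_sub_lt hrpos hrd hm)
  refine measure_mono_null (t := ⋃ p : ((Fin r ⊕ Fin (d - r)) ≃ Fin d) × (Fin r ↪ SymCoord d),
    param Sige p.1 p.2 J '' paramDomain p.1 p.2 J) ?_
    (measure_iUnion_null fun p => volume_image_param_eq_zero Sige p.1 p.2 J hq)
  rintro A ⟨-, x, hx, hrank⟩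
  obtain ⟨σ, B, hB⟩ := exists_chartMatrix_mulVec_eq_zero hrd _ hrank
  obtain ⟨g, hg, hdet⟩ := (symCoeffMatrix x (chartMatrix σ B)).exists_injective_isUnit_det_submatrix
    (linearIndependent_row_symCoeffMatrix hx (linearIndependent_row_chartMatrix σ B))
  exact Set.mem_iUnion.2 ⟨(σ, ⟨g, hg⟩), mem_image_param Sige σ ⟨g, hg⟩ J hB hdet⟩
end
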